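/- arXiv:1103.5970 — 6 statements merged into one kernel-verified Lean document; each statement's English description precedes it below -/
import Mathlib

section
/- If a group G is virtually nilpotent, i.e. G has a nilpotent subgroup of finite index, then G admits no 2-transitive action on an infinite set: for every action of G on an infinite set X, the action is not 2-transitive. (Lemma 1 of the paper.) -/
/-- An action of a group `G` on a set `X` is 2-transitive if for any two pairs
`(x₁, x₂)` and `(y₁, y₂)` of elements of `X` with `x₁ ≠ x₂` and `y₁ ≠ y₂` there exists
`g ∈ G` with `g • x₁ = y₁` and `g • x₂ = y₂`. -/
def IsTwoTransitive (G X : Type*) [Group G] [MulAction G X] : Prop :=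
  ∀ x₁ x₂ y₁ y₂ : X, x₁ ≠ x₂ → y₁ ≠ y₂ → ∃ g : G, g • x₁ = y₁ ∧ g • x₂ = y₂

/-!
Let `N` be the normal core of `H`: a nilpotent normal subgroup of finite index. If `N` acted
trivially, the orbits of `G` would be finite. Otherwise walk down the lower central series of `N`
to the last term `Z` that acts nontrivially. Since a 2-transitive action is primitive, the normal
subgroup `Z` is transitive, and as `⁅Z, N⁆` acts trivially, the action of `N` commutes with a
transitive one: an element of `N` fixing one point fixes every point. Hence `N ⊓ G_x` has finite
index in the point stabiliser `G_x` and acts trivially, so the orbits of `G_x` are finite; but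
`G_x` is transitive on the infinite set `X \ {x}`.
-/

open MulAction Subgroup
open scoped commutatorElement

section

variable {G X : Type*} [Group G] [MulAction G X]

theorem IsTwoTransitive.isMultiplyPretransitive (h : IsTwoTransitive G X) :
    IsMultiplyPretransitive G X 2 :=
  is_two_pretransitive_iff.mpr fun hab hcd => h _ _ _ _ hab hcd

theorem Subgroup.exists_lowerCentralSeries_not_le_and_succ_le {N K : Subgroup G}
    (hN : Group.IsNilpotent N) (hNK : ¬ N ≤ K) :
    ∃ n, ¬ N.lowerCentralSeries n ≤ K ∧ N.lowerCentralSeries (n + 1) ≤ K := by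
  obtain ⟨m, hm⟩ := (isNilpotent_iff_lowerCentralSeries N).mp hN
  exact Nat.exists_not_and_succ_of_not_zero_of_exists hNK ⟨m, hm ▸ bot_le⟩

theorem MulAction.finite_orbit_of_le_stabilizer {K : Subgroup G} [K.FiniteIndex] {x : X}
    (hK : K ≤ stabilizer G x) : (orbit G x).Finite := by
  have := finiteIndex_of_le hK
  exact Set.finite_of_ncard_ne_zero (index_stabilizer G x ▸ FiniteIndex.index_ne_zero)

theorem MulAction.le_fixingSubgroup_univ_iff {Z : Subgroup G} :
    Z ≤ fixingSubgroup G (Set.univ : Set X) ↔ fixedPoints Z X = Set.univ := by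
  simp only [SetLike.le_def, mem_fixingSubgroup_iff, Set.mem_univ, true_implies,
    Set.eq_univ_iff_forall, mem_fixedPoints, Subtype.forall]
  exact ⟨fun h _ _ hz => h hz _, fun h _ hz y => h y _ hz⟩

theorem MulAction.smul_eq_self_of_commutator_le {Z N : Subgroup G} [IsPretransitive Z X]
    (hZN : ⁅Z, N⁆ ≤ fixingSubgroup G (Set.univ : Set X)) {n : G} (hn : n ∈ N) {x : X}
    (hx : n • x = x) (y : X) : n • y = y := by
  obtain ⟨⟨z, hz⟩, rfl⟩ := exists_smul_eq Z x y
  have hc : ⁅z, n⁆ • n • z • x = n • z • x :=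
    (mem_fixingSubgroup_iff G).mp (hZN (commutator_mem_commutator hz hn)) _ trivial
  calc n • (⟨z, hz⟩ : Z) • x = ⁅z, n⁆ • n • z • x := hc.symm
    _ = z • n • x := by simp only [smul_smul, commutatorElement_def]; group
    _ = (⟨z, hz⟩ : Z) • x := by rw [hx]; rfl

end

/-- A virtually nilpotent group admits no 2-transitive action on an infinite set. -/
theorem virtually_nilpotent_not_two_transitive
    (G : Type*) [Group G] (H : Subgroup G) (hfin : H.FiniteIndex)
    (hnil : Group.IsNilpotent H)
    (X : Type*) [Infinite X] [MulAction G X] :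
    ¬ IsTwoTransitive G X := by
  intro h2
  have := isPreprimitive_of_is_two_pretransitive h2.isMultiplyPretransitive
  set N := H.normalCore
  have hN : Group.IsNilpotent N :=
    Group.nilpotent_of_mulEquiv (subgroupOfEquivOfLe H.normalCore_le)
  obtain ⟨x⟩ := ‹Infinite X›.nonempty
  have hN_moves : ¬ N ≤ fixingSubgroup G (Set.univ : Set X) := fun hle =>
    Set.infinite_univ (orbit_eq_univ G x ▸
      finite_orbit_of_le_stabilizer fun n hn => (mem_fixingSubgroup_iff G).mp (hle hn) x trivial)
  obtain ⟨j, hZ_moves, hZN⟩ := exists_lowerCentralSeries_not_le_and_succ_le hN hN_moves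
  have : IsPretransitive (N.lowerCentralSeries j) X :=
    IsQuasiPreprimitive.isPretransitive_of_normal (le_fixingSubgroup_univ_iff.not.mp hZ_moves)
  obtain ⟨y, hyx⟩ := exists_ne x
  have hfin_orbit : (orbit (stabilizer G x) y).Finite :=
    finite_orbit_of_le_stabilizer (K := N.subgroupOf (stabilizer G x))
      fun n hn => smul_eq_self_of_commutator_le hZN hn n.2 y
  refine (Set.finite_singleton x).infinite_compl (hfin_orbit.subset fun z hzx => ?_)
  obtain ⟨g, hgx, hgy⟩ := h2 x y x z hyx.symm (Ne.symm hzx)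
  exact ⟨⟨g, hgx⟩, hgy⟩
end

section
/- Let a group G act 2-transitively on a set X, let A be a normal subgroup of G, and let x ∈ X be such that the map A → X, a ↦ a·x, is a bijection. Then the conjugation action of the stabilizer Gₓ = {g ∈ G : g·x = x} on A is transitive on the nontrivial elements of A: for any a, a' ∈ A with a ≠ 1 and a' ≠ 1, there exists g ∈ Gₓ with g a g⁻¹ = a'. (Key step in the proof of Lemma 1.) -/
section

variable {G X : Type*} [Group G] [MulAction G X]

theorem IsTwoTransitive.exists_mem_stabilizer_smul_eq (h2 : IsTwoTransitive G X) {x y y' : X}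
    (hy : y ≠ x) (hy' : y' ≠ x) : ∃ g ∈ MulAction.stabilizer G x, g • y = y' :=
  h2 x y x y' hy.symm hy'.symm

theorem Subgroup.eq_of_smul_eq_of_injective {A : Subgroup G} {x : X}
    (hinj : Function.Injective (fun a : A => (a : G) • x)) {b c : G} (hb : b ∈ A) (hc : c ∈ A)
    (h : b • x = c • x) : b = c :=
  congrArg Subtype.val (@hinj ⟨b, hb⟩ ⟨c, hc⟩ h)

theorem Subgroup.smul_ne_self_of_injective {A : Subgroup G} {x : X}
    (hinj : Function.Injective (fun a : A => (a : G) • x)) {b : G} (hb : b ∈ A) (hb1 : b ≠ 1) :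
    b • x ≠ x := fun h =>
  hb1 (Subgroup.eq_of_smul_eq_of_injective hinj hb A.one_mem (by rwa [one_smul]))

theorem conj_smul_of_mem_stabilizer {g : G} {x : X} (hg : g ∈ MulAction.stabilizer G x) (a : G) :
    (g * a * g⁻¹) • x = g • a • x := by
  rw [mul_smul, mul_smul, inv_smul_eq_iff.mpr (MulAction.mem_stabilizer_iff.mp hg).symm]

end

/-- Let `G` act 2-transitively on `X`, let `A` be a normal subgroup of `G`, and let `x ∈ X`
be such that `a ↦ a • x` is a bijection from `A` to `X`. Then the conjugation action of the
stabilizer of `x` on `A` is transitive on the nontrivial elements of `A`. -/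
theorem stabilizer_conj_transitive_on_nontrivial_elements
    {G X : Type*} [Group G] [MulAction G X]
    (h2 : IsTwoTransitive G X)
    (A : Subgroup G) (hAnorm : A.Normal) (x : X)
    (hbij : Function.Bijective (fun a : A => (a : G) • x)) :
    ∀ a a' : G, a ∈ A → a' ∈ A → a ≠ 1 → a' ≠ 1 →
      ∃ g ∈ MulAction.stabilizer G x, g * a * g⁻¹ = a' := by
  intro a a' ha ha' hne hne'
  obtain ⟨g, hgx, hga⟩ := h2.exists_mem_stabilizer_smul_eq
    (Subgroup.smul_ne_self_of_injective hbij.injective ha hne)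
    (Subgroup.smul_ne_self_of_injective hbij.injective ha' hne')
  refine ⟨g, hgx, Subgroup.eq_of_smul_eq_of_injective hbij.injective
    (hAnorm.conj_mem a ha g) ha' ?_⟩
  rw [conj_smul_of_mem_stabilizer hgx, hga]
end

section
/- Let Ψ be a finite irreducible crystallographic root system with base Δ of cardinality m ≥ 1, let W be its Weyl group, let a ∈ Δ, and let W' be the subgroup of W generated by the reflections in the elements of Δ∖{a}. Suppose there IS an enumeration a₁, a₂, …, a_m of Δ with a₁ = a whose Cartan integers satisfy ⟨aᵢ, aⱼ^∨⟩ = −1 whenever |i−j| = 1 and ⟨aᵢ, aⱼ^∨⟩ = 0 whenever |i−j| ≥ 2 (i.e. Ψ is of type A_m and a is an end root of Δ). Then the number of (W',W')-double cosets in W is exactly 2. (Claim verified before Lemma 2 of the paper.) -/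
/-!
Let `s₀, …, s_{m-1}` be the simple reflections in the order of the enumeration, so that
`W' = ⟨s₁, …, s_{m-1}⟩`. The Weyl group is generated by the simple reflections: lowering the
height of a positive root by simple reflections conjugates its reflection into a simple one.
The type `A` Cartan integers give `s_i² = 1`, `s_i s_j = s_j s_i` for `|i - j| ≥ 2` and
`s_i s_{i+1} s_i = s_{i+1} s_i s_{i+1}`; with these, left multiplication by any `s_i` maps each
set `c_k W'`, `k ≤ m`, where `c_k = s_{k-1} ⋯ s₀`, to another such set. Hence
`W = ⋃ c_k W' ⊆ W' ∪ W' s₀ W'`.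
Finally `s₀ ∉ W'`: elements of `W'` move vectors only within the span of `α₁, …, α_{m-1}`,
which does not contain `s₀ α₀ - α₀ = -2 α₀`.
-/

open Set

/-- A root pairing is irreducible if its set of roots admits no partition into two nonempty
mutually orthogonal parts. -/
def RootPairingIsIrreducible {ι R M N : Type*} [CommRing R] [AddCommGroup M] [Module R M]
    [AddCommGroup N] [Module R N] (P : RootPairing ι R M N) : Prop :=
  ∀ s : Set ι, s.Nonempty → sᶜ.Nonempty → ∃ i ∈ s, ∃ j ∈ sᶜ, P.pairing i j ≠ 0

/-- A root system is a root pairing for which the roots and coroots span their ambient modules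
(the definition of Mathlib of December 2024, no longer present as a structure). -/
structure RootSystem (ι R M N : Type*) [CommRing R] [AddCommGroup M] [Module R M]
    [AddCommGroup N] [Module R N] extends RootPairing ι R M N where
  span_eq_top : Submodule.span R (range root) = ⊤
  span_eq_top' : Submodule.span R (range coroot) = ⊤

/-- The Weyl group of a root system, as a subgroup of linear automorphisms of `M`
(the definition of Mathlib of December 2024). -/
def RootSystem.weylGroup {ι R M N : Type*} [CommRing R] [AddCommGroup M] [Module R M]
    [AddCommGroup N] [Module R N] (P : RootSystem ι R M N) : Subgroup (M ≃ₗ[R] M) :=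
  Subgroup.closure (range P.reflection)

/-- A base (set of simple roots) of a root system: a linearly independent set of roots such that
every root is either a nonnegative integer combination or a nonpositive integer combination of
the roots in the base. -/
structure RootSystemIsBase {ι M N : Type*} [AddCommGroup M] [Module ℝ M]
    [AddCommGroup N] [Module ℝ N] (P : RootSystem ι ℝ M N) (Δ : Set ι) : Prop where
  linearIndependent : LinearIndependent ℝ (fun i : Δ => P.root i)
  pos_or_neg : ∀ i : ι, P.root i ∈ AddSubmonoid.closure (P.root '' Δ) ∨
    -P.root i ∈ AddSubmonoid.closure (P.root '' Δ)

section

variable {G : Type*} [Group G]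

structure IsTypeACoxeterFamily (s : ℕ → G) (m : ℕ) : Prop where
  mul_self : ∀ i < m, s i * s i = 1
  commute : ∀ i j, j < m → i + 2 ≤ j → Commute (s i) (s j)
  braid : ∀ i, i + 1 < m → s i * s (i + 1) * s i = s (i + 1) * s i * s (i + 1)

def descendingProd (s : ℕ → G) : ℕ → G
  | 0 => 1
  | k + 1 => s k * descendingProd s k

variable {s : ℕ → G} {m : ℕ} {H : Subgroup G}

lemma exists_descendingProd_succ_eq_mul (hH : ∀ j, 0 < j → j < m → s j ∈ H) {k : ℕ}
    (hk : k < m) : ∃ u ∈ H, descendingProd s (k + 1) = u * s 0 := by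
  induction k with
  | zero => exact ⟨1, H.one_mem, by simp [descendingProd]⟩
  | succ k ih =>
    obtain ⟨u, hu, hku⟩ := ih (by omega)
    exact ⟨s (k + 1) * u, H.mul_mem (hH _ k.succ_pos hk) hu, by
      rw [descendingProd, hku, mul_assoc]⟩

namespace IsTypeACoxeterFamily

lemma commute_descendingProd (hs : IsTypeACoxeterFamily s m) {j k : ℕ} (hkj : k < j)
    (hj : j < m) : Commute (s j) (descendingProd s k) := by
  induction k with
  | zero => exact Commute.one_right _
  | succ k ih => exact (hs.commute k j hj (by omega)).symm.mul_right (ih (by omega))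

lemma mul_descendingProd_of_add_two_le (hs : IsTypeACoxeterFamily s m) {i k : ℕ}
    (hik : i + 2 ≤ k) (hk : k ≤ m) :
    s i * descendingProd s k = descendingProd s k * s (i + 1) := by
  induction k, hik using Nat.le_induction with
  | base =>
    have hc := (hs.commute_descendingProd (Nat.lt_succ_self i) (by omega)).eq
    calc s i * descendingProd s (i + 2)
        = (s i * s (i + 1) * s i) * descendingProd s i := by simp only [descendingProd, mul_assoc]
      _ = s (i + 1) * s i * (s (i + 1) * descendingProd s i) := by
          rw [hs.braid i (by omega), mul_assoc]
      _ = descendingProd s (i + 2) * s (i + 1) := by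
          rw [hc]; simp only [descendingProd, mul_assoc]
  | succ k hik ih =>
    calc s i * descendingProd s (k + 1) = s k * (s i * descendingProd s k) := by
          rw [descendingProd, ← mul_assoc, (hs.commute i k (by omega) hik).eq, mul_assoc]
      _ = descendingProd s (k + 1) * s (i + 1) := by
          rw [ih (by omega), descendingProd, mul_assoc]

lemma exists_mul_descendingProd_eq (hs : IsTypeACoxeterFamily s m)
    (hH : ∀ j, 0 < j → j < m → s j ∈ H) {i k : ℕ} (hi : i < m) (hk : k ≤ m) :
    ∃ k' ≤ m, ∃ w ∈ H, s i * descendingProd s k = descendingProd s k' * w := by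
  rcases lt_or_ge k i with hki | hik
  · exact ⟨k, hk, s i, hH i (by omega) hi, (hs.commute_descendingProd hki hi).eq⟩
  obtain rfl | rfl | hik : k = i ∨ k = i + 1 ∨ i + 2 ≤ k := by omega
  · exact ⟨k + 1, by omega, 1, H.one_mem, by rw [mul_one, descendingProd]⟩
  · refine ⟨i, by omega, 1, H.one_mem, ?_⟩
    rw [descendingProd, ← mul_assoc, hs.mul_self i hi, one_mul, mul_one]
  · exact ⟨k, hk, s (i + 1), hH _ i.succ_pos (by omega),
      hs.mul_descendingProd_of_add_two_le hik hk⟩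

theorem mem_or_mem_doubleCoset (hs : IsTypeACoxeterFamily s m)
    (hH : ∀ j, 0 < j → j < m → s j ∈ H) {g : G} (hg : g ∈ Subgroup.closure (s '' Set.Iio m)) :
    g ∈ H ∨ g ∈ DoubleCoset.doubleCoset (s 0) H H := by
  have hcoset : ∃ k ≤ m, ∃ w ∈ H, g = descendingProd s k * w := by
    induction hg using Subgroup.closure_induction_left with
    | one => exact ⟨0, m.zero_le, 1, H.one_mem, by simp [descendingProd]⟩
    | mul_left x hx y _ ih =>
      obtain ⟨i, hi, rfl⟩ := hx
      obtain ⟨k, hk, w, hw, rfl⟩ := ih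
      obtain ⟨k', hk', w', hw', h⟩ := hs.exists_mul_descendingProd_eq hH hi hk
      exact ⟨k', hk', w' * w, H.mul_mem hw' hw, by rw [← mul_assoc, h, mul_assoc]⟩
    | inv_mul_cancel x hx y _ ih =>
      obtain ⟨i, hi, rfl⟩ := hx
      obtain ⟨k, hk, w, hw, rfl⟩ := ih
      obtain ⟨k', hk', w', hw', h⟩ := hs.exists_mul_descendingProd_eq hH hi hk
      refine ⟨k', hk', w' * w, H.mul_mem hw' hw, ?_⟩
      rw [inv_eq_of_mul_eq_one_right (hs.mul_self i hi), ← mul_assoc, h, mul_assoc]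
  obtain ⟨k, hk, w, hw, rfl⟩ := hcoset
  cases k with
  | zero => exact Or.inl (by simpa [descendingProd] using hw)
  | succ k =>
    obtain ⟨u, hu, hku⟩ := exists_descendingProd_succ_eq_mul hH (Nat.lt_of_succ_le hk)
    exact Or.inr (DoubleCoset.mem_doubleCoset.mpr ⟨u, hu, w, hw, by rw [hku]⟩)

end IsTypeACoxeterFamily

theorem DoubleCoset.card_quotient_eq_two {g : G} (hg : g ∉ H)
    (hcover : ∀ x, x ∈ H ∨ x ∈ DoubleCoset.doubleCoset g H H) :
    Nat.card (DoubleCoset.Quotient (H : Set G) H) = 2 := by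
  rw [Nat.card_eq_two_iff]
  refine ⟨DoubleCoset.mk H H 1, DoubleCoset.mk H H g, ?_, ?_⟩
  · rw [Ne, DoubleCoset.eq]
    rintro ⟨h, hh, k, hk, rfl⟩
    exact hg (by simpa using H.mul_mem hh hk)
  refine Set.eq_univ_of_forall fun q => ?_
  induction q using Quotient.inductionOn with | h x => ?_
  rcases hcover x with hx | hx
  · exact Or.inl ((DoubleCoset.eq H H 1 x).mpr ⟨x, hx, 1, H.one_mem, by group⟩).symm
  · exact Or.inr ((DoubleCoset.eq H H g x).mpr (DoubleCoset.mem_doubleCoset.mp hx)).symm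

end

namespace RootSystem

variable {ι R M N : Type*} [CommRing R] [AddCommGroup M] [Module R M] [AddCommGroup N]
  [Module R N] (P : RootSystem ι R M N)

def weylReflection (i : ι) : P.weylGroup :=
  ⟨P.reflection i, Subgroup.subset_closure ⟨i, rfl⟩⟩

@[simp]
lemma coe_weylReflection (i : ι) : (P.weylReflection i : M ≃ₗ[R] M) = P.reflection i :=
  rfl

lemma weylReflection_mul_self (i : ι) : P.weylReflection i * P.weylReflection i = 1 :=
  Subtype.ext (by simpa [sq] using P.reflection_sq i)

lemma weylReflection_reflectionPerm (i j : ι) :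
    P.weylReflection (P.reflectionPerm i j) =
      P.weylReflection i * P.weylReflection j * P.weylReflection i :=
  Subtype.ext P.reflection_reflectionPerm

variable {P}

lemma commute_weylReflection_of_pairing_eq_zero {i j : ι} (h : P.pairing j i = 0) :
    Commute (P.weylReflection i) (P.weylReflection j) := by
  have hconj := P.weylReflection_reflectionPerm i j
  rw [P.reflectionPerm_eq_of_pairing_eq_zero h] at hconj
  calc P.weylReflection i * P.weylReflection j
      = P.weylReflection i * P.weylReflection j * P.weylReflection i * P.weylReflection i := by
        rw [mul_assoc _ (P.weylReflection i), P.weylReflection_mul_self, mul_one]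
    _ = P.weylReflection j * P.weylReflection i := by rw [← hconj]

/-- Both `s_i s_j s_i` and `s_j s_i s_j` are the reflection in the root `α_i + α_j`. -/
lemma weylReflection_braid {i j : ι} (hij : P.pairing i j = -1) (hji : P.pairing j i = -1) :
    P.weylReflection i * P.weylReflection j * P.weylReflection i =
      P.weylReflection j * P.weylReflection i * P.weylReflection j := by
  have h : P.reflectionPerm i j = P.reflectionPerm j i := P.root.injective <| by
    simp only [RootPairing.root_reflectionPerm, RootPairing.reflection_apply_root, hij, hji]
    module
  rw [← weylReflection_reflectionPerm, ← weylReflection_reflectionPerm, h]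

lemma isTypeACoxeterFamily_weylReflection {F : ℕ → ι} {m : ℕ}
    (hadj : ∀ i, i + 1 < m → P.pairing (F i) (F (i + 1)) = -1 ∧ P.pairing (F (i + 1)) (F i) = -1)
    (hfar : ∀ i j, j < m → i + 2 ≤ j → P.pairing (F j) (F i) = 0) :
    IsTypeACoxeterFamily (fun n => P.weylReflection (F n)) m where
  mul_self i _ := P.weylReflection_mul_self (F i)
  commute i j hj hij := commute_weylReflection_of_pairing_eq_zero (hfar i j hj hij)
  braid i hi := weylReflection_braid (hadj i hi).1 (hadj i hi).2

lemma sub_mem_span_of_mem_closure_reflection {S : Set ι} {w : P.weylGroup}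
    (hw : w ∈ Subgroup.closure {w : P.weylGroup | ∃ i ∈ S, (w : M ≃ₗ[R] M) = P.reflection i})
    (x : M) : (w : M ≃ₗ[R] M) x - x ∈ Submodule.span R (P.root '' S) := by
  induction hw using Subgroup.closure_induction generalizing x with
  | mem w hw =>
    obtain ⟨i, hi, hwi⟩ := hw
    rw [hwi, RootPairing.reflection_apply, sub_sub_cancel_left]
    exact neg_mem (Submodule.smul_mem _ _ (Submodule.subset_span ⟨i, hi, rfl⟩))
  | one => simp
  | mul w₁ w₂ _ _ h₁ h₂ =>
    rw [← sub_add_sub_cancel _ ((w₂ : M ≃ₗ[R] M) x)]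
    exact add_mem (h₁ _) (h₂ x)
  | inv w _ h =>
    have hw := neg_mem (h (((w⁻¹ : P.weylGroup) : M ≃ₗ[R] M) x))
    rwa [neg_sub, ← LinearEquiv.mul_apply, ← Subgroup.coe_mul, mul_inv_cancel,
      OneMemClass.coe_one, LinearEquiv.coe_one, id] at hw

lemma weylReflection_eq_of_root_eq_smul {R : Type*} [Field R] [CharZero R] [Module R M]
    [Module R N] [Finite ι] {P : RootSystem ι R M N} {i j : ι} {t : R}
    (h : P.root j = t • P.root i) : P.weylReflection j = P.weylReflection i := by
  have := IsAddTorsionFree.of_isTorsionFree R M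
  have := IsAddTorsionFree.of_isTorsionFree R N
  have hcoroot : P.coroot i = t • P.coroot j := RootPairing.coroot_eq_smul_coroot_iff.mpr h
  refine Subtype.ext (LinearEquiv.ext fun x => ?_)
  simp only [coe_weylReflection, RootPairing.reflection_apply, RootPairing.coroot', h, hcoroot,
    smul_smul, map_smul, LinearMap.smul_apply, smul_eq_mul, mul_comm]

lemma weylReflection_notMem_closure {R : Type*} [Field R] [CharZero R] [Module R M] [Module R N]
    {P : RootSystem ι R M N} {S : Set ι} {a : ι}
    (ha : P.root a ∉ Submodule.span R (P.root '' S)) :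
    P.weylReflection a ∉
      Subgroup.closure {w : P.weylGroup | ∃ i ∈ S, (w : M ≃ₗ[R] M) = P.reflection i} := by
  intro hmem
  have h := sub_mem_span_of_mem_closure_reflection hmem (P.root a)
  rw [coe_weylReflection, RootPairing.reflection_apply_self, ← neg_add', neg_mem_iff,
    ← two_smul R] at h
  exact ha ((Submodule.smul_mem_iff _ two_ne_zero).mp h)

end RootSystem

lemma exists_nat_coeffs_of_mem_addSubmonoid_closure {ι R M : Type*} [Semiring R]
    [AddCommMonoid M] [Module R M] {v : ι → M} {s : Set ι} [Fintype s] {x : M}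
    (hx : x ∈ AddSubmonoid.closure (v '' s)) : ∃ c : s → ℕ, x = ∑ i, (c i : R) • v i := by
  rw [Set.image_eq_range] at hx
  obtain ⟨c, rfl⟩ := AddSubmonoid.exists_of_mem_closure_range _ _ hx
  exact ⟨c, by simp [Nat.cast_smul_eq_nsmul]⟩

lemma RootPairing.zero_lt_pairing_iff' {ι R M N : Type*} [Field R] [LinearOrder R]
    [IsStrictOrderedRing R] [AddCommGroup M] [Module R M] [AddCommGroup N] [Module R N]
    [Finite ι] (P : RootPairing ι R M N) {i j : ι} :
    0 < P.pairing i j ↔ 0 < P.pairing j i := by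
  simp only [← P.algebraMap_pairingIn R, Algebra.algebraMap_self, RingHom.id_apply]
  exact P.zero_lt_pairingIn_iff' R

/-- Pairing `α_j = ∑ c_i α_i` with the coroot of `α_j` gives `2 = ∑ c_i ⟨α_i, α_j^∨⟩`. -/
lemma RootPairing.exists_pos_of_root_eq_sum {ι R M N : Type*} [Field R] [LinearOrder R]
    [IsStrictOrderedRing R] [AddCommGroup M] [Module R M] [AddCommGroup N] [Module R N]
    [Finite ι] {P : RootPairing ι R M N} {s : Set ι} [Fintype s] {j : ι} {c : s → ℕ}
    (hc : P.root j = ∑ i, (c i : R) • P.root i) : ∃ i : s, 0 < c i ∧ 0 < P.pairing j i := by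
  have h2 : ∑ i, (c i : R) * P.pairing i j = 2 := by
    simpa [map_sum, RootPairing.root_coroot'_eq_pairing] using (congrArg (P.coroot' j) hc).symm
  obtain ⟨i, -, hi⟩ := Finset.exists_lt_of_sum_lt (f := fun _ => (0 : R))
    (show ∑ _ : s, (0 : R) < ∑ i, (c i : R) * P.pairing i j by simp [h2])
  obtain ⟨hci, hij⟩ | ⟨hci, -⟩ := pos_and_pos_or_neg_and_neg_of_mul_pos hi
  · exact ⟨i, Nat.cast_pos.mp hci, P.zero_lt_pairing_iff'.mp hij⟩
  · exact absurd hci (Nat.cast_nonneg _).not_gt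

namespace RootSystemIsBase

variable {ι M N : Type*} [AddCommGroup M] [Module ℝ M] [AddCommGroup N] [Module ℝ N]
  {P : RootSystem ι ℝ M N} {Δ : Set ι}

/-- `s_i α_j` keeps the coefficient `c i' > 0`, so it is a positive root, of height lowered by
`⟨α_j, α_i^∨⟩ > 0`. -/
lemma exists_root_reflectionPerm_eq_sum_lt (hΔ : RootSystemIsBase P Δ) [Fintype Δ] {j : ι}
    {c : Δ → ℕ} (hc : P.root j = ∑ i, (c i : ℝ) • P.root i) {i i' : Δ}
    (hji : 0 < P.pairing j i) (hi' : i' ≠ i) (hci' : c i' ≠ 0) :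
    ∃ c' : Δ → ℕ, P.root (P.reflectionPerm i j) = ∑ k, (c' k : ℝ) • P.root k ∧
      ∑ k, c' k < ∑ k, c k := by
  classical
  set L := Fintype.linearCombination ℝ (fun k : Δ => P.root k)
  have hL : ∀ d : Δ → ℕ, L (fun k => (d k : ℝ)) = ∑ k, (d k : ℝ) • P.root k := fun _ => rfl
  have hinj : Function.Injective L := hΔ.linearIndependent.fintypeLinearCombination_injective
  have hrefl : P.root (P.reflectionPerm i j) =
      L ((fun k => (c k : ℝ)) - Pi.single i (P.pairing j i)) := by
    rw [map_sub, Fintype.linearCombination_apply_single, hL, ← hc,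
      RootPairing.root_reflectionPerm, RootPairing.reflection_apply_root]
  rcases hΔ.pos_or_neg (P.reflectionPerm i j) with h | h <;>
    obtain ⟨c', hc'⟩ := exists_nat_coeffs_of_mem_addSubmonoid_closure (R := ℝ) h
  · refine ⟨c', hc', ?_⟩
    have hcoeff := hinj ((hL c').trans (hc'.symm.trans hrefl))
    have hsum : ∑ k, (c' k : ℝ) = ∑ k, (c k : ℝ) - P.pairing j i := by
      simp [hcoeff, Finset.sum_sub_distrib]
    exact_mod_cast (show ∑ k, (c' k : ℝ) < ∑ k, (c k : ℝ) by linarith)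
  · have hcoeff : (fun k => (c k : ℝ)) + (fun k => (c' k : ℝ)) = Pi.single i (P.pairing j i) :=
      hinj (by rw [map_add, hL, hL, ← hc, ← hc', hrefl, map_sub, hL, ← hc]; abel)
    have hi'coeff := congrFun hcoeff i'
    simp only [Pi.add_apply, Pi.single_apply, hi', if_false] at hi'coeff
    exact absurd (by exact_mod_cast hi'coeff) (by omega : c i' + c' i' ≠ 0)

lemma weylReflection_mem_closure_of_root_eq_sum (hΔ : RootSystemIsBase P Δ) [Finite ι]
    [Fintype Δ] {j : ι} {c : Δ → ℕ} (hc : P.root j = ∑ i, (c i : ℝ) • P.root i) :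
    P.weylReflection j ∈ Subgroup.closure (P.weylReflection '' Δ) := by
  induction hn : ∑ i, c i using Nat.strong_induction_on generalizing j c with
  | _ n ih =>
  obtain ⟨i, -, hji⟩ := RootPairing.exists_pos_of_root_eq_sum hc
  have hsi : P.weylReflection i ∈ Subgroup.closure (P.weylReflection '' Δ) :=
    Subgroup.subset_closure ⟨i, i.2, rfl⟩
  by_cases hsimple : ∃ i' ≠ i, c i' ≠ 0
  · obtain ⟨i', hi', hci'⟩ := hsimple
    obtain ⟨c', hc', hlt⟩ := hΔ.exists_root_reflectionPerm_eq_sum_lt hc hji hi' hci'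
    rw [← P.reflectionPerm_self i j, RootSystem.weylReflection_reflectionPerm]
    exact mul_mem (mul_mem hsi (ih _ (hn ▸ hlt) hc' rfl)) hsi
  · push Not at hsimple
    have hji : P.root j = (c i : ℝ) • P.root i := by
      rw [hc, Finset.sum_eq_single i (fun k _ hk => by simp [hsimple k hk]) (by simp)]
    rwa [RootSystem.weylReflection_eq_of_root_eq_smul hji]

lemma weylReflection_mem_closure (hΔ : RootSystemIsBase P Δ) [Finite ι] (j : ι) :
    P.weylReflection j ∈ Subgroup.closure (P.weylReflection '' Δ) := by
  have := Fintype.ofFinite Δ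
  rcases hΔ.pos_or_neg j with h | h <;>
    obtain ⟨c, hc⟩ := exists_nat_coeffs_of_mem_addSubmonoid_closure (R := ℝ) h
  · exact hΔ.weylReflection_mem_closure_of_root_eq_sum hc
  · have hc' : P.root (P.reflectionPerm j j) = ∑ i, (c i : ℝ) • P.root i := by
      rw [RootPairing.root_reflectionPerm, RootPairing.reflection_apply_self, hc]
    have := hΔ.weylReflection_mem_closure_of_root_eq_sum hc'
    rwa [RootSystem.weylReflection_reflectionPerm, RootSystem.weylReflection_mul_self,
      one_mul] at this

theorem closure_weylReflection_image_eq_top (hΔ : RootSystemIsBase P Δ) [Finite ι] :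
    Subgroup.closure (P.weylReflection '' Δ) = ⊤ := by
  have hle : P.weylGroup ≤ (Subgroup.closure (P.weylReflection '' Δ)).map P.weylGroup.subtype :=
    (Subgroup.closure_le _).mpr <| by
      rintro _ ⟨j, rfl⟩
      exact ⟨_, hΔ.weylReflection_mem_closure j, rfl⟩
  rw [eq_top_iff]
  rintro g -
  obtain ⟨g', hg', hgg'⟩ := hle g.2
  rwa [← Subtype.ext hgg']

end RootSystemIsBase

lemma exists_nat_indexing_of_equiv {ι : Type*} {Δ : Set ι} {m : ℕ} (hm : 0 < m)
    (f : Fin m ≃ Δ) : ∃ F : ℕ → ι, (∀ n (h : n < m), F n = f ⟨n, h⟩) ∧ F '' Set.Iio m = Δ := by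
  refine ⟨fun n => if h : n < m then f ⟨n, h⟩ else f ⟨0, hm⟩, fun n h => dif_pos h, ?_⟩
  ext x
  refine ⟨?_, fun hx => ⟨f.symm ⟨x, hx⟩, (f.symm ⟨x, hx⟩).2, by simp⟩⟩
  rintro ⟨n, hn : n < m, rfl⟩
  simp only [dif_pos hn, Subtype.coe_prop]

/-- **Claim before Lemma 2.** Let `Ψ` be a finite irreducible crystallographic root system with base `Δ` of
cardinality `m ≥ 1`, let `W` be its Weyl group, let `a ∈ Δ`, and let `W'` be the subgroup of `W`
generated by the reflections in the elements of `Δ \ {a}`. If there is an enumeration of `Δ`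
starting at `a` whose Cartan integers are those of type `Aₘ` with `a` an end root, then the
number of `(W', W')`-double cosets in `W` is exactly `2`. -/
theorem card_double_cosets_eq_two_of_type_A_end_root
    {ι M N : Type*} [Fintype ι] [AddCommGroup M] [Module ℝ M] [AddCommGroup N] [Module ℝ N]
    (P : RootSystem ι ℝ M N)
    (Δ : Set ι) (hΔ : RootSystemIsBase P Δ)
    (m : ℕ) (hm : 1 ≤ m)
    (a : ι)
    (W' : Subgroup P.weylGroup)
    (hW' : W' = Subgroup.closure
      {w : P.weylGroup | ∃ i ∈ Δ \ {a}, (w : M ≃ₗ[ℝ] M) = P.reflection i})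
    (hA : ∃ f : Fin m ≃ Δ, ((f ⟨0, by omega⟩ : Δ) : ι) = a ∧
      (∀ p q : Fin m, ((p : ℕ) + 1 = (q : ℕ) ∨ (q : ℕ) + 1 = (p : ℕ)) →
        P.pairing (f p) (f q) = -1) ∧
      (∀ p q : Fin m, ((p : ℕ) + 2 ≤ (q : ℕ) ∨ (q : ℕ) + 2 ≤ (p : ℕ)) →
        P.pairing (f p) (f q) = 0)) :
    Nat.card (DoubleCoset.Quotient (W' : Set P.weylGroup) (W' : Set P.weylGroup)) = 2 := by
  obtain ⟨f, rfl, hadj, hfar⟩ := hA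
  obtain ⟨F, hF, hΔF⟩ := exists_nat_indexing_of_equiv hm f
  have hs : IsTypeACoxeterFamily (fun n => P.weylReflection (F n)) m :=
    P.isTypeACoxeterFamily_weylReflection
      (fun i hi => by
        rw [hF i (by omega), hF (i + 1) hi]
        exact ⟨hadj _ _ (Or.inl rfl), hadj _ _ (Or.inr rfl)⟩)
      (fun i j hj hij => by
        rw [hF i (by omega), hF j hj]
        exact hfar _ _ (Or.inr hij))
  have htop : Subgroup.closure ((fun n => P.weylReflection (F n)) '' Set.Iio m) = ⊤ := by
    rw [← Set.image_image, hΔF, hΔ.closure_weylReflection_image_eq_top]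
  have hH : ∀ j, 0 < j → j < m → P.weylReflection (F j) ∈ W' := fun j hj0 hj => by
    rw [hW', hF j hj]
    exact Subgroup.subset_closure ⟨f ⟨j, hj⟩, ⟨(f _).2, fun h =>
      hj0.ne' (congrArg Fin.val (f.injective (Subtype.ext h)))⟩, rfl⟩
  have hs0 : P.weylReflection (F 0) ∉ W' := by
    rw [hW', hF 0 hm]
    exact RootSystem.weylReflection_notMem_closure
      (LinearIndepOn.notMem_span (v := P.root) hΔ.linearIndependent (f _).2)
  exact DoubleCoset.card_quotient_eq_two hs0 fun g =>
    hs.mem_or_mem_doubleCoset hH (htop ▸ Subgroup.mem_top g)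
end

section
/- Let a group G act 2-transitively on a set X, let x, x' ∈ X with x ≠ x', let B be the stabilizer of x in G, and let N be the setwise stabilizer of {x, x'} in G (the subgroup of g ∈ G with g·{x,x'} = {x,x'}). Then H := B ∩ N has index exactly 2 in N, and for every n ∈ N with n ∉ B one has G = B ∪ BnB. (The construction, noted in Section 5.3, of a Tits system of rank 1 from a 2-transitive action.) -/
open Pointwise

/-!
By orbit–stabilizer, the index of `B ∩ N` in `N` is the size of the `N`-orbit of `x`; this orbit
lies in `{x, x'}` and contains `x'` because 2-transitivity provides an element swapping `x` and `x'`.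
For the decomposition, if `g • x ≠ x` then 2-transitivity gives `b ∈ B` with `b • (g • x) = n • x`,
so `n⁻¹ * b * g ∈ B` and `g = b⁻¹ * n * (n⁻¹ * b * g)`.
-/

open MulAction

section

variable {G X : Type*} [Group G] [MulAction G X]

theorem relIndex_stabilizer_eq_ncard_orbit (x : X) (K : Subgroup G) :
    (stabilizer G x).relIndex K = (orbit K x).ncard := by
  have : (stabilizer G x).subgroupOf K = stabilizer K x := by ext; rfl
  rw [Subgroup.relIndex, this, index_stabilizer]

theorem orbit_stabilizer_set_subset {s : Set X} {x : X} (hx : x ∈ s) :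
    orbit (stabilizer G s) x ⊆ s := by
  rintro _ ⟨g, rfl⟩
  exact (mem_stabilizer_set.mp g.2 x).mpr hx

namespace IsTwoTransitive

theorem orbit_stabilizer_pair (h2 : IsTwoTransitive G X) {x y : X} (hxy : x ≠ y) :
    orbit (stabilizer G ({x, y} : Set X)) x = {x, y} := by
  refine (orbit_stabilizer_set_subset (Set.mem_insert x _)).antisymm ?_
  obtain ⟨n, hnx, hny⟩ := h2 x y y x hxy hxy.symm
  have hn : n ∈ stabilizer G ({x, y} : Set X) := by
    rw [mem_stabilizer_iff, Set.smul_set_insert, Set.smul_set_singleton, hnx, hny,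
      Set.pair_comm]
  rintro z (rfl | rfl)
  · exact mem_orbit_self z
  · exact ⟨⟨n, hn⟩, hnx⟩

theorem relIndex_stabilizer_pair (h2 : IsTwoTransitive G X) {x y : X} (hxy : x ≠ y) :
    (stabilizer G x).relIndex (stabilizer G ({x, y} : Set X)) = 2 := by
  rw [relIndex_stabilizer_eq_ncard_orbit, h2.orbit_stabilizer_pair hxy, Set.ncard_pair hxy]

theorem mem_stabilizer_or_eq_mul_mul (h2 : IsTwoTransitive G X) {x : X} {n : G}
    (hn : n ∉ stabilizer G x) (g : G) :
    g ∈ stabilizer G x ∨ ∃ b ∈ stabilizer G x, ∃ b' ∈ stabilizer G x, g = b * n * b' := by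
  by_cases hg : g ∈ stabilizer G x
  · exact Or.inl hg
  obtain ⟨b, hbx, hbg⟩ := h2 x (g • x) x (n • x) (Ne.symm hg) (Ne.symm hn)
  refine Or.inr ⟨b⁻¹, ?_, n⁻¹ * b * g, ?_, by group⟩
  · rw [mem_stabilizer_iff, inv_smul_eq_iff, hbx]
  · rw [mem_stabilizer_iff, mul_smul, mul_smul, hbg, inv_smul_smul]

end IsTwoTransitive

end

/-- Let a group `G` act 2-transitively on a set `X`, let `x ≠ x'` in `X`, let `B` be the
stabilizer of `x` and `N` the setwise stabilizer of `{x, x'}`. Then `H = B ∩ N` has index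
exactly `2` in `N`, and for every `n ∈ N` with `n ∉ B` one has `G = B ∪ BnB`. -/
theorem rank_one_tits_system_of_two_transitive
    {G X : Type*} [Group G] [MulAction G X]
    (h2 : IsTwoTransitive G X) (x x' : X) (hxx' : x ≠ x')
    (B N : Subgroup G)
    (hB : B = MulAction.stabilizer G x)
    (hN : N = MulAction.stabilizer G ({x, x'} : Set X)) :
    B.relIndex N = 2 ∧
      ∀ n ∈ N, n ∉ B → ∀ g : G, g ∈ B ∨ ∃ b ∈ B, ∃ b' ∈ B, g = b * n * b' := by
  subst hB hN
  exact ⟨h2.relIndex_stabilizer_pair hxx', fun _ _ hn => h2.mem_stabilizer_or_eq_mul_mul hn⟩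
end

section
/- Let G be a group, B a subgroup of G, U a subgroup of B, and T a finite subset of G such that G = ⋃_{t ∈ T} U t B (every element of G can be written as u t b with u ∈ U, t ∈ T, b ∈ B). If U contains a subgroup U₀ of finite index in U with U₀ contained in the center of G, then B has finite index in G. (The argument, used in the proofs of Propositions 2 and 4, that a weakly-split Bruhat decomposition with virtually central U forces B to have finite index.) -/
/-!
Pick finitely many representatives `R` of `U` modulo `U₀ ⊓ U`. An element `z ∈ U₀ ⊓ U` is central
and lies in `B`, so `r z t b = r t (z b)`; hence `G = R T B` is a finite union of left cosets of `B`.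
-/

open Pointwise

namespace Subgroup

variable {G : Type*} [Group G]

theorem finiteIndex_of_finite_mul_eq_univ {B : Subgroup G} {S : Set G} (hS : S.Finite)
    (hcover : S * (B : Set G) = Set.univ) : B.FiniteIndex := by
  have : Finite S := hS
  have hsurj : Function.Surjective (fun s : S => ((s : G) : G ⧸ B)) := by
    intro q
    obtain ⟨g, rfl⟩ := QuotientGroup.mk_surjective q
    obtain ⟨s, hs, b, hb, rfl⟩ := Set.mem_mul.mp (hcover ▸ Set.mem_univ g)
    exact ⟨⟨s, hs⟩, (QuotientGroup.mk_mul_of_mem s hb).symm⟩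
  have : Finite (G ⧸ B) := Finite.of_surjective _ hsurj
  exact B.finiteIndex_of_finite_quotient

theorem exists_finite_coe_subset_mul_inf (H K : Subgroup G) [(H.subgroupOf K).FiniteIndex] :
    ∃ R : Set G, R.Finite ∧ (K : Set G) ⊆ R * (H ⊓ K : Subgroup G) := by
  have : Finite (K ⧸ H.subgroupOf K) := finite_quotient_of_finiteIndex
  refine ⟨Set.range fun q : K ⧸ H.subgroupOf K => ((q.out : K) : G), Set.finite_range _, ?_⟩
  intro k hk
  set r : K := (QuotientGroup.mk ⟨k, hk⟩ : K ⧸ H.subgroupOf K).out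
  have hz : r⁻¹ * ⟨k, hk⟩ ∈ H.subgroupOf K := QuotientGroup.eq.mp (QuotientGroup.out_eq' _)
  exact Set.mem_mul.mpr ⟨r, ⟨_, rfl⟩, (r : G)⁻¹ * k, ⟨hz, (r⁻¹ * ⟨k, hk⟩ : K).2⟩,
    mul_inv_cancel_left _ _⟩

end Subgroup

theorem finite_index_of_cover_by_double_cosets_of_virtually_central_general
    {G : Type*} [Group G] (B U U₀ : Subgroup G)
    (hUB : U ≤ B)
    (hU₀central : U₀ ≤ Subgroup.center G)
    (hU₀fin : (U₀.subgroupOf U).FiniteIndex)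
    (T : Finset G)
    (hcover : ∀ g : G, ∃ u ∈ U, ∃ t ∈ T, ∃ b ∈ B, g = u * t * b) :
    B.FiniteIndex := by
  obtain ⟨R, hR, hUR⟩ := Subgroup.exists_finite_coe_subset_mul_inf U₀ U
  refine Subgroup.finiteIndex_of_finite_mul_eq_univ (hR.mul T.finite_toSet)
    (Set.eq_univ_of_forall fun g => ?_)
  obtain ⟨u, hu, t, ht, b, hb, rfl⟩ := hcover g
  obtain ⟨r, hr, z, ⟨hzU₀, hzU⟩, rfl⟩ := Set.mem_mul.mp (hUR hu)
  have hzt : t * z = z * t := Subgroup.mem_center_iff.mp (hU₀central hzU₀) t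
  refine Set.mem_mul.mpr ⟨r * t, Set.mul_mem_mul hr ht, z * b, B.mul_mem (hUB hzU) hb, ?_⟩
  rw [mul_assoc r z t, ← hzt]
  group

/-- Let `G` be a group, `B` a subgroup, `U` a subgroup of `B`, and `T` a finite subset of `G`
such that `G = ⋃_{t ∈ T} U t B`. If `U` contains a subgroup `U₀` of finite index in `U` with
`U₀` contained in the center of `G`, then `B` has finite index in `G`. -/
theorem finite_index_of_cover_by_double_cosets_of_virtually_central
    {G : Type*} [Group G] (B U U₀ : Subgroup G)
    (hUB : U ≤ B) (hU₀U : U₀ ≤ U)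
    (hU₀central : U₀ ≤ Subgroup.center G)
    (hU₀fin : (U₀.subgroupOf U).FiniteIndex)
    (T : Finset G)
    (hcover : ∀ g : G, ∃ u ∈ U, ∃ t ∈ T, ∃ b ∈ B, g = u * t * b) :
    B.FiniteIndex :=
  finite_index_of_cover_by_double_cosets_of_virtually_central_general B U U₀ hUB hU₀central hU₀fin T
    hcover
end

section
/- Let G be a group, let B and N be subgroups of G that together generate G (G is the subgroup closure of B ∪ N), let H be a subgroup of B normalized by N (nHn⁻¹ = H for all n ∈ N), and let U be a subgroup of B contained in the center of G such that every element of B is a product hu with h ∈ H and u ∈ U. If B is self-normalizing in G (the normalizer of B in G equals B), then B = G. (The concluding step in the proof of Theorem A.) -/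
open Subgroup

theorem Subgroup.conj_mem_of_forall_eq_mul_central {G : Type*} [Group G] {B H U : Subgroup G}
    (hHB : H ≤ B) (hUB : U ≤ B) (hUcentral : U ≤ center G)
    (hB : ∀ b ∈ B, ∃ h ∈ H, ∃ u ∈ U, b = h * u) {g b : G} (hg : g ∈ normalizer (H : Set G))
    (hb : b ∈ B) : g * b * g⁻¹ ∈ B := by
  obtain ⟨h, hh, u, hu, rfl⟩ := hB b hb
  have hcomm : g⁻¹ * u = u * g⁻¹ := mem_center_iff.mp (hUcentral hu) g⁻¹
  have hconj : g * (h * u) * g⁻¹ = g * h * g⁻¹ * u := by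
    rw [mul_assoc (g * h) g⁻¹ u, hcomm]
    group
  rw [hconj]
  exact B.mul_mem (hHB ((hg h).mp hh)) (hUB hu)

theorem Subgroup.normalizer_le_normalizer_of_forall_eq_mul_central {G : Type*} [Group G]
    {B H U : Subgroup G} (hHB : H ≤ B) (hUB : U ≤ B) (hUcentral : U ≤ center G)
    (hB : ∀ b ∈ B, ∃ h ∈ H, ∃ u ∈ U, b = h * u) :
    normalizer (H : Set G) ≤ normalizer (B : Set G) :=
  le_normalizer_iff.mpr fun _ hg _ hb ↦
    conj_mem_of_forall_eq_mul_central hHB hUB hUcentral hB hg hb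

/-- Let `G` be a group, let `B` and `N` be subgroups generating `G`, let `H ≤ B` be normalized
by `N`, and let `U ≤ B` be contained in the center of `G` with `B = HU`. If `B` is
self-normalizing in `G`, then `B = G`. -/
theorem eq_top_of_weakly_split_with_central_U
    {G : Type*} [Group G] (B N H U : Subgroup G)
    (hgen : Subgroup.closure ((B : Set G) ∪ (N : Set G)) = ⊤)
    (hHB : H ≤ B)
    (hHN : ∀ n ∈ N, Subgroup.map (MulAut.conj n).toMonoidHom H = H)
    (hUB : U ≤ B)
    (hUcentral : U ≤ Subgroup.center G)
    (hB : ∀ b ∈ B, ∃ h ∈ H, ∃ u ∈ U, b = h * u)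
    (hself : Subgroup.normalizer (B : Set G) = B) :
    B = ⊤ := by
  have hNH : N ≤ normalizer (H : Set G) := fun n hn ↦ mem_normalizer_iff_map_conj_eq.mpr (hHN n hn)
  have hNB : N ≤ B :=
    hself ▸ hNH.trans (normalizer_le_normalizer_of_forall_eq_mul_central hHB hUB hUcentral hB)
  rw [eq_top_iff, ← hgen, closure_le]
  exact Set.union_subset le_rfl hNB
end
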